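/- arXiv:1609.06810 — 8 statements merged into one kernel-verified Lean document; each statement's English description precedes it below -/
import Mathlib

section
/- For any sequence (x_k) of complex numbers and any n ≥ 0, the Hankel determinant det[x_{i+j}]_{0≤i,j≤n} equals det[x'_{i+j}]_{0≤i,j≤n}, where x'_m = ∑_{k=0}^m C(m,k) x_k is the binomial transform. -/
/-!
Let `L` be the linear functional on `R[X]` with `L (X ^ k) = x k`, so that the Hankel matrix is
`[L (X ^ i * X ^ j)]` and `x' m = L ((X + 1) ^ m)`. Row `i` of the Pascal matrix `P = [i choose j]`
is the coefficient vector of `(X + 1) ^ i`, hence `P * H * Pᵀ = [L ((X + 1) ^ i * (X + 1) ^ j)]`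
is the Hankel matrix of `x'`. As `P` is unitriangular, `det P = 1`.
-/

open Finset Matrix Polynomial

variable {R : Type*} [CommRing R]

def Matrix.hankel (x : ℕ → R) (n : ℕ) : Matrix (Fin n) (Fin n) R :=
  of fun i j => x (i + j)

def Matrix.pascal (R : Type*) [CommRing R] (n : ℕ) : Matrix (Fin n) (Fin n) R :=
  of fun i j => (i.1.choose j : R)

def binomialTransform (x : ℕ → R) (m : ℕ) : R :=
  ∑ k ∈ range (m + 1), (m.choose k : R) * x k

def Polynomial.momentFunctional (x : ℕ → R) : R[X] →ₗ[R] R :=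
  lsum fun k => LinearMap.mulRight R (x k)

theorem Matrix.det_pascal (n : ℕ) : (pascal R n).det = 1 := by
  rw [det_of_isLowerTriangular]
  · simp [pascal]
  · intro i j hij
    simp [pascal, Nat.choose_eq_zero_of_lt (show i.1 < j.1 from hij)]

theorem Polynomial.momentFunctional_monomial (x : ℕ → R) (k : ℕ) (a : R) :
    momentFunctional x (monomial k a) = a * x k := by
  simp [momentFunctional, sum_monomial_index]

theorem Polynomial.X_add_one_pow_eq_sum_monomial {m n : ℕ} (h : m < n) :
    ((X + 1) ^ m : R[X]) = ∑ k ∈ range n, monomial k (m.choose k : R) := by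
  have hdeg : ((X + 1) ^ m : R[X]).natDegree < n :=
    (natDegree_pow_le_of_le m (natDegree_add_le_of_degree_le natDegree_X_le (by simp))).trans_lt
      (by rwa [mul_one])
  conv_lhs => rw [as_sum_range' _ n hdeg]
  simp only [coeff_X_add_one_pow]

theorem Polynomial.momentFunctional_X_add_one_pow (x : ℕ → R) (m : ℕ) :
    momentFunctional x ((X + 1) ^ m) = binomialTransform x m := by
  simp [X_add_one_pow_eq_sum_monomial m.lt_succ_self, momentFunctional_monomial, binomialTransform]

theorem Matrix.mul_hankel_mul_transpose_apply {m n : ℕ} (x : ℕ → R)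
    (P : Matrix (Fin m) (Fin n) R) (i j : Fin m) :
    (P * hankel x n * Pᵀ) i j =
      momentFunctional x ((∑ a : Fin n, monomial a (P i a)) * ∑ b : Fin n, monomial b (P j b)) := by
  rw [sum_mul_sum]
  simp only [monomial_mul_monomial, map_sum, momentFunctional_monomial, mul_apply,
    transpose_apply, hankel, of_apply, sum_mul]
  rw [sum_comm]
  exact sum_congr rfl fun a _ => sum_congr rfl fun b _ => by ring

theorem Matrix.pascal_mul_hankel_mul_transpose (x : ℕ → R) (n : ℕ) :
    pascal R n * hankel x n * (pascal R n)ᵀ = hankel (binomialTransform x) n := by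
  ext i j
  rw [mul_hankel_mul_transpose_apply]
  simp only [pascal, of_apply]
  rw [Fin.sum_univ_eq_sum_range (fun a => monomial a (i.1.choose a : R)),
    Fin.sum_univ_eq_sum_range (fun b => monomial b (j.1.choose b : R)),
    ← X_add_one_pow_eq_sum_monomial i.2, ← X_add_one_pow_eq_sum_monomial j.2, ← pow_add,
    momentFunctional_X_add_one_pow]
  rfl

theorem Matrix.det_hankel_binomialTransform (x : ℕ → R) (n : ℕ) :
    (hankel (binomialTransform x) n).det = (hankel x n).det := by
  rw [← pascal_mul_hankel_mul_transpose, det_mul, det_mul, det_transpose, det_pascal, one_mul,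
    mul_one]

theorem hankel_det_binomial_transform (x : ℕ → ℂ) (n : ℕ) :
    Matrix.det (Matrix.of fun i j : Fin (n + 1) => x (i.1 + j.1)) =
      Matrix.det (Matrix.of fun i j : Fin (n + 1) =>
        ∑ k ∈ Finset.range (i.1 + j.1 + 1), ((i.1 + j.1).choose k : ℂ) * x k) :=
  (det_hankel_binomialTransform x (n + 1)).symm
end

section
/- Barrucand's identity: for every nonnegative integer n, ∑_{k=0}^n C(n,k) f_k = ∑_{k=0}^n C(n,k)^2 C(2k,k), where f_k = ∑_{j=0}^k C(k,j)^3 is the k-th Franel number. -/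
/-!
Work in `ℕ[X][X]` with `x = C X` and `y = X`. Both sides are the coefficient of `x^n y^n` in
`P^n`, where `P = (1 + x + y)(x + y + xy)`. Writing `P = (1 + x)(1 + y)(x + y) + xy` and expanding
binomially gives the left side, because the `x^k y^k` coefficient of `((1 + x)(1 + y)(x + y))^k` is
the Franel number `f_k`. Factoring `P = (1 + x + y)(x + (1 + x)y)` instead, the `y^n` coefficient
of `P^n` is `∑ C(n,k)^2 (1 + x)^(2k) x^(n-k)`, whose `x^n` coefficient is the right side.
-/

open Polynomial Finset

namespace Polynomial

variable {R : Type*} [CommSemiring R]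

theorem coeff_C_add_C_mul_X_pow (b c : R) (n k : ℕ) :
    ((C b + C c * X) ^ n).coeff k = c ^ k * b ^ (n - k) * n.choose k := by
  rw [add_comm, add_pow, finsetSum_coeff]
  simp only [mul_pow, ← C_pow, ← C_eq_natCast, mul_assoc, ← C_mul, mul_left_comm _ (X ^ _),
    coeff_X_pow_mul', coeff_C]
  rw [sum_eq_single k]
  · simp
  · intro i _ hik
    grind
  · intro hk
    simp [Nat.choose_eq_zero_of_lt (by simpa using hk)]

theorem coeff_C_add_X_pow_mul_C_add_C_mul_X_pow (a b c : R) (n : ℕ) :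
    ((C a + X) ^ n * (C b + C c * X) ^ n).coeff n =
      ∑ k ∈ range (n + 1), n.choose k ^ 2 * (a * c) ^ k * b ^ (n - k) := by
  rw [mul_comm, coeff_mul, Nat.sum_antidiagonal_eq_sum_range_succ_mk]
  refine sum_congr rfl fun k hk => ?_
  have hkn : k ≤ n := Nat.lt_succ_iff.mp (mem_range.mp hk)
  rw [add_comm (C a), coeff_X_add_C_pow, coeff_C_add_C_mul_X_pow, Nat.sub_sub_self hkn,
    Nat.choose_symm hkn]
  ring

theorem coeff_coeff_mul_C_X_mul_X_pow (p : R[X][X]) (k m : ℕ) :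
    ((p * (C X * X) ^ m).coeff (k + m)).coeff (k + m) = (p.coeff k).coeff k := by
  rw [mul_pow, ← C_pow, ← mul_assoc, coeff_mul_X_pow, coeff_mul_C, coeff_mul_X_pow]

end Polynomial

def franel (k : ℕ) : ℕ := ∑ j ∈ range (k + 1), k.choose j ^ 3

theorem franel_eq_coeff (k : ℕ) :
    franel k = ((((1 + C X) * (1 + X) * (C X + X) : ℕ[X][X]) ^ k).coeff k).coeff k := by
  have hsplit : ((1 + C X) * (1 + X) * (C X + X) : ℕ[X][X]) =
      C (1 + X) * ((C 1 + X) * (C X + C 1 * X)) := by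
    simp only [map_add, map_one, one_mul]
    ring
  rw [hsplit, mul_pow (M := ℕ[X][X]), mul_pow (M := ℕ[X][X]), ← C_pow, coeff_C_mul,
    coeff_C_add_X_pow_mul_C_add_C_mul_X_pow, mul_sum, finsetSum_coeff]
  refine sum_congr rfl fun j hj => ?_
  have hjk : j ≤ k := Nat.lt_succ_iff.mp (mem_range.mp hj)
  have hterm : (1 + X : ℕ[X]) ^ k * ((k.choose j : ℕ[X]) ^ 2 * (1 * 1) ^ j * X ^ (k - j)) =
      ((k.choose j ^ 2 : ℕ) : ℕ[X]) * ((1 + X) ^ k * X ^ (k - j)) := by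
    push_cast
    ring
  rw [hterm, coeff_natCast_mul, coeff_mul_X_pow', if_pos (Nat.sub_le k j), coeff_one_add_X_pow,
    Nat.sub_sub_self hjk]
  simp only [Nat.cast_id]
  ring

theorem sum_choose_mul_franel_eq_coeff (n : ℕ) :
    ∑ k ∈ range (n + 1), n.choose k * franel k =
      ((((1 + C X + X) * (C X + X + C X * X) : ℕ[X][X]) ^ n).coeff n).coeff n := by
  have hsplit : ((1 + C X + X) * (C X + X + C X * X) : ℕ[X][X]) =
      (1 + C X) * (1 + X) * (C X + X) + C X * X := by ring
  rw [hsplit, add_pow (R := ℕ[X][X]), finsetSum_coeff, finsetSum_coeff]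
  refine sum_congr rfl fun k hk => ?_
  obtain ⟨m, rfl⟩ := Nat.exists_eq_add_of_le (Nat.lt_succ_iff.mp (mem_range.mp hk))
  rw [coeff_mul_natCast, coeff_mul_natCast, Nat.cast_id, Nat.add_sub_cancel_left,
    coeff_coeff_mul_C_X_mul_X_pow, franel_eq_coeff, mul_comm]

theorem sum_choose_sq_mul_choose_eq_coeff (n : ℕ) :
    ∑ k ∈ range (n + 1), n.choose k ^ 2 * (2 * k).choose k =
      ((((1 + C X + X) * (C X + X + C X * X) : ℕ[X][X]) ^ n).coeff n).coeff n := by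
  have hsplit : ((1 + C X + X) * (C X + X + C X * X) : ℕ[X][X]) =
      (C (1 + X) + X) * (C X + C (1 + X) * X) := by
    simp only [map_add, map_one]
    ring
  rw [hsplit, mul_pow (M := ℕ[X][X]), coeff_C_add_X_pow_mul_C_add_C_mul_X_pow, finsetSum_coeff]
  refine sum_congr rfl fun k hk => ?_
  have hkn : k ≤ n := Nat.lt_succ_iff.mp (mem_range.mp hk)
  have hterm : (n.choose k : ℕ[X]) ^ 2 * ((1 + X) * (1 + X)) ^ k * X ^ (n - k) =
      ((n.choose k ^ 2 : ℕ) : ℕ[X]) * ((1 + X) ^ (2 * k) * X ^ (n - k)) := by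
    rw [← sq, ← pow_mul]
    push_cast
    ring
  rw [hterm, coeff_natCast_mul, coeff_mul_X_pow', if_pos (Nat.sub_le n k), coeff_one_add_X_pow,
    Nat.sub_sub_self hkn]
  simp only [Nat.cast_id]

theorem barrucand_identity (n : ℕ) :
    ∑ k ∈ Finset.range (n + 1), n.choose k *
        (∑ j ∈ Finset.range (k + 1), (k.choose j) ^ 3) =
      ∑ k ∈ Finset.range (n + 1), (n.choose k) ^ 2 * (2 * k).choose k :=
  (sum_choose_mul_franel_eq_coeff n).trans (sum_choose_sq_mul_choose_eq_coeff n).symm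
end

section
/- For all positive integers m and n, the number D_n^(m) := ∑_{k=0}^n C(n,k)^m C(2k,k) C(2(n-k),n-k) is divisible by 4, and D_n^(m) is divisible by 8 if and only if n is not a power of two. -/
/-!
Write `s n` for the binary digit sum. By Kummer's theorem `v₂ (n.choose k) = s k + s (n - k) - s n`
and `v₂ (centralBinom k) = s k`, so the `k`-th summand of `D_n^(m)` has 2-adic valuation
`m v₂ (n.choose k) + s k + s (n - k) ≥ s n`. The summands for `k` and `n - k` coincide, and the
middle one (`n = 2k`, so `s k = s n`) has valuation at least `2 s n`; pairing them gives
`2 ^ (s n + 1) ∣ D_n^(m)`, hence `4 ∣ D_n^(m)`, and `8 ∣ D_n^(m)` as soon as `s n ≥ 2`, i.e. when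
`n` is not a power of two. If `s n = 1`, the two end summands equal `centralBinom n ≡ 2 (mod 4)`
while every other summand has valuation at least `m + 2 ≥ 3`, so `D_n^(m) ≡ 4 (mod 8)`.
-/

open Finset Nat

namespace Nat

theorem digits_sum_pos (b : ℕ) {n : ℕ} (hn : n ≠ 0) : 0 < (b.digits n).sum :=
  (Nat.pos_of_ne_zero (getLast_digit_ne_zero b hn)).trans_le
    (List.le_sum_of_mem (List.getLast_mem _))

theorem digits_sum_base_mul {b : ℕ} (hb : 1 < b) (n : ℕ) :
    (b.digits (b * n)).sum = (b.digits n).sum := by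
  rcases n.eq_zero_or_pos with rfl | hn
  · simp
  · simp [digits_base_mul hb hn]

theorem digits_sum_base_pow {b : ℕ} (hb : 1 < b) (j : ℕ) : (b.digits (b ^ j)).sum = 1 := by
  rw [← mul_one (b ^ j), digits_base_pow_mul hb one_pos, digits_of_lt b 1 one_ne_zero hb]
  simp

theorem digits_sum_eq_one_iff {b n : ℕ} (hb : 1 < b) :
    (b.digits n).sum = 1 ↔ ∃ j, n = b ^ j := by
  refine ⟨fun h => ?_, fun ⟨j, hj⟩ => hj ▸ digits_sum_base_pow hb j⟩
  induction n using Nat.strong_induction_on with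
  | _ n ih =>
    have hn : n ≠ 0 := by rintro rfl; simp at h
    have hdiv : n / b < n := div_lt_self (Nat.pos_of_ne_zero hn) hb
    rw [digits_def' hb (Nat.pos_of_ne_zero hn), List.sum_cons] at h
    rcases (n / b).eq_zero_or_pos with hq | hq
    · have hr : n % b = 1 := by simpa [hq] using h
      refine ⟨0, ?_⟩
      rw [← div_add_mod n b, hq, hr]
      simp
    · have hr : n % b = 0 := by have := digits_sum_pos b hq.ne'; omega
      obtain ⟨j, hj⟩ := ih (n / b) hdiv (by omega)
      refine ⟨j + 1, ?_⟩
      rw [← div_add_mod n b, hr, hj, pow_succ']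
      ring

theorem sub_one_mul_padicValNat_choose_add_digits_sum {p n k : ℕ} [Fact p.Prime]
    (h : k ≤ n) :
    (p - 1) * padicValNat p (n.choose k) + (p.digits n).sum =
      (p.digits k).sum + (p.digits (n - k)).sum := by
  have hv : padicValNat p n ! =
      padicValNat p (n.choose k) + padicValNat p k ! + padicValNat p (n - k)! := by
    rw [← choose_mul_factorial_mul_factorial h,
      padicValNat.mul (mul_ne_zero (choose_pos h).ne' (factorial_ne_zero _)) (factorial_ne_zero _),
      padicValNat.mul (choose_pos h).ne' (factorial_ne_zero _)]
  have := congrArg ((p - 1) * ·) hv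
  simp only [mul_add, sub_one_mul_padicValNat_factorial] at this
  have := digit_sum_le p n
  have := digit_sum_le p k
  have := digit_sum_le p (n - k)
  omega

theorem padicValNat_two_centralBinom (n : ℕ) :
    padicValNat 2 n.centralBinom = (digits 2 n).sum := by
  have := sub_one_mul_padicValNat_choose_add_digits_sum (p := 2) (n := 2 * n) (k := n) (by omega)
  rw [show 2 * n - n = n by omega, digits_sum_base_mul one_lt_two] at this
  simpa [centralBinom_eq_two_mul_choose] using this

end Nat

theorem two_pow_succ_dvd_sum_range_of_symm {f : ℕ → ℕ} {n a : ℕ}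
    (hsymm : ∀ k ≤ n, f (n - k) = f k) (hdvd : ∀ k ≤ n, 2 ^ a ∣ f k)
    (hmid : ∀ k ≤ n, n - k = k → 2 ^ (a + 1) ∣ f k) :
    2 ^ (a + 1) ∣ ∑ k ∈ range (n + 1), f k := by
  rw [← ZMod.natCast_eq_zero_iff, Nat.cast_sum]
  refine sum_involution (fun k _ => n - k) (fun k hk => ?_) (fun k hk hne => ?_)
    (fun k hk => ?_) (fun k hk => ?_)
  all_goals have hkn : k ≤ n := Nat.lt_succ_iff.mp (mem_range.mp hk)
  · rw [hsymm k hkn, ← Nat.cast_add, ZMod.natCast_eq_zero_iff, ← two_mul, pow_succ']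
    exact mul_dvd_mul_left 2 (hdvd k hkn)
  · exact fun heq => hne ((ZMod.natCast_eq_zero_iff _ _).2 (hmid k hkn heq))
  · exact mem_range.mpr (by omega)
  · exact Nat.sub_sub_self hkn

section dTerm

variable {m n k : ℕ}

def dTerm (m n k : ℕ) : ℕ := n.choose k ^ m * k.centralBinom * (n - k).centralBinom

theorem dTerm_sub_self (h : k ≤ n) : dTerm m n (n - k) = dTerm m n k := by
  rw [dTerm, dTerm, choose_symm h, Nat.sub_sub_self h, mul_right_comm]

theorem dTerm_ne_zero (h : k ≤ n) : dTerm m n k ≠ 0 :=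
  mul_ne_zero (mul_ne_zero (pow_ne_zero _ (choose_pos h).ne') (centralBinom_ne_zero k))
    (centralBinom_ne_zero _)

theorem padicValNat_dTerm (h : k ≤ n) :
    padicValNat 2 (dTerm m n k) =
      m * padicValNat 2 (n.choose k) + (digits 2 k).sum + (digits 2 (n - k)).sum := by
  have hc := (choose_pos h).ne'
  rw [dTerm, padicValNat.mul (mul_ne_zero (pow_ne_zero _ hc) (centralBinom_ne_zero k))
      (centralBinom_ne_zero _), padicValNat.mul (pow_ne_zero _ hc) (centralBinom_ne_zero k),
    padicValNat.pow, padicValNat_two_centralBinom, padicValNat_two_centralBinom]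

theorem two_pow_dvd_dTerm_iff {r : ℕ} (h : k ≤ n) :
    2 ^ r ∣ dTerm m n k ↔
      r ≤ m * padicValNat 2 (n.choose k) + (digits 2 k).sum + (digits 2 (n - k)).sum := by
  rw [padicValNat_dvd_iff_le (dTerm_ne_zero h), padicValNat_dTerm h]

end dTerm

def dSum (m n : ℕ) : ℕ := ∑ k ∈ range (n + 1), dTerm m n k

theorem two_pow_digits_sum_succ_dvd_dSum (m : ℕ) {n : ℕ} (hn : n ≠ 0) :
    2 ^ ((digits 2 n).sum + 1) ∣ dSum m n := by
  refine two_pow_succ_dvd_sum_range_of_symm (fun k hk => dTerm_sub_self hk)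
    (fun k hk => ?_) (fun k hk hmid => ?_)
  all_goals
    rw [two_pow_dvd_dTerm_iff hk]
    have := sub_one_mul_padicValNat_choose_add_digits_sum (p := 2) hk
  · omega
  · have hk0 := digits_sum_pos 2 (by omega : k ≠ 0)
    rw [hmid, show n = 2 * k by omega, digits_sum_base_mul one_lt_two]
    omega

theorem dSum_mod_eight_of_digits_sum_eq_one {m n : ℕ} (hm : 0 < m) (h : (digits 2 n).sum = 1) :
    dSum m n % 8 = 4 := by
  obtain ⟨n, rfl⟩ : ∃ n', n = n' + 1 := exists_eq_succ_of_ne_zero (by rintro rfl; simp at h)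
  have hinner : 8 ∣ ∑ k ∈ range n, dTerm m (n + 1) (k + 1) := dvd_sum fun k hk => by
    have hk := mem_range.mp hk
    have h1 := digits_sum_pos 2 (by omega : k + 1 ≠ 0)
    have h2 := digits_sum_pos 2 (by omega : n + 1 - (k + 1) ≠ 0)
    have hv := sub_one_mul_padicValNat_choose_add_digits_sum (p := 2) (by omega : k + 1 ≤ n + 1)
    rw [show 8 = 2 ^ 3 by rfl, two_pow_dvd_dTerm_iff (by omega)]
    have := Nat.le_mul_of_pos_left (padicValNat 2 ((n + 1).choose (k + 1))) hm
    omega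
  have hend : dTerm m (n + 1) 0 % 4 = 2 := by
    have hv (r : ℕ) : 2 ^ r ∣ dTerm m (n + 1) 0 ↔ r ≤ 1 := by
      rw [two_pow_dvd_dTerm_iff (zero_le _), choose_zero_right, padicValNat_one_right, digits_zero,
        Nat.sub_zero, h]
      simp
    have h2 := (hv 1).2 le_rfl
    have h4 := (hv 2).not.2 (by norm_num)
    norm_num at h2 h4
    omega
  have hsymm := dTerm_sub_self (m := m) (zero_le (n + 1))
  rw [Nat.sub_zero] at hsymm
  rw [dSum, sum_range_succ, sum_range_succ', hsymm]
  omega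

theorem Dmn_div_four_eight (m n : ℕ) (hm : 1 ≤ m) (hn : 1 ≤ n) :
    4 ∣ (∑ k ∈ Finset.range (n + 1),
        (n.choose k) ^ m * (2 * k).choose k * (2 * (n - k)).choose (n - k)) ∧
      (8 ∣ (∑ k ∈ Finset.range (n + 1),
          (n.choose k) ^ m * (2 * k).choose k * (2 * (n - k)).choose (n - k)) ↔
        ¬ ∃ j : ℕ, n = 2 ^ j) := by
  change 4 ∣ dSum m n ∧ (8 ∣ dSum m n ↔ ¬∃ j : ℕ, n = 2 ^ j)
  rw [← digits_sum_eq_one_iff one_lt_two]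
  have hdvd := two_pow_digits_sum_succ_dvd_dSum m (by omega : n ≠ 0)
  have hpos := digits_sum_pos 2 (by omega : n ≠ 0)
  refine ⟨(pow_dvd_pow 2 (by omega : 2 ≤ (digits 2 n).sum + 1)).trans hdvd, ?_⟩
  by_cases h : (digits 2 n).sum = 1
  · have := dSum_mod_eight_of_digits_sum_eq_one hm h
    simp only [h, not_true_eq_false, iff_false]
    omega
  · exact iff_of_true ((pow_dvd_pow 2 (by omega : 3 ≤ (digits 2 n).sum + 1)).trans hdvd) h
end

section
/- For every nonnegative integer n, the Domb number D_n := ∑_{k=0}^n C(n,k)^2 C(2k,k) C(2(n−k),n−k) satisfies D_n ≡ 1 (mod 3). -/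
/-!
By Lucas's theorem, binomial coefficients modulo a prime `p` factor over base-`p` digits. A carry
in `b + b` forces `p ∣ (2b choose b)`, so central binomial coefficients factor over digits as
well, hence so does every summand of the Domb sum. Summing over the digits gives the Lucas
property `D (p m + r) ≡ D m * D r (mod p)` for `r < p`. Modulo 3 every Domb number is therefore a
product of `D 0 = 1`, `D 1 = 4` and `D 2 = 28`, all `≡ 1`.
-/

open Finset Nat

theorem Finset.sum_range_mul_eq_sum_sum {M : Type*} [AddCommMonoid M] (f : ℕ → M) (p m : ℕ) :
    ∑ k ∈ range (p * m), f k = ∑ j ∈ range m, ∑ s ∈ range p, f (p * j + s) := by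
  induction m with
  | zero => simp
  | succ m ih => rw [Nat.mul_succ, sum_range_add, ih, sum_range_succ]

def dombTerm (n k : ℕ) : ℕ :=
  n.choose k ^ 2 * k.centralBinom * (n - k).centralBinom

def domb (n : ℕ) : ℕ :=
  ∑ k ∈ range (n + 1), dombTerm n k

theorem dombTerm_eq_zero_of_lt {n k : ℕ} (h : n < k) : dombTerm n k = 0 := by
  simp [dombTerm, choose_eq_zero_of_lt h]

theorem domb_eq_sum_range_of_lt {n N : ℕ} (h : n < N) :
    domb n = ∑ k ∈ range N, dombTerm n k :=
  sum_subset (range_subset_range.mpr h) fun _ _ hk ↦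
    dombTerm_eq_zero_of_lt (by simpa using hk)

section Lucas

variable {p : ℕ} [Fact p.Prime]

theorem choose_mul_add_mul_add_cast_zmod {m j r s : ℕ} (hr : r < p) (hs : s < p) :
    ((p * m + r).choose (p * j + s) : ZMod p) = r.choose s * m.choose j := by
  have h := (ZMod.natCast_eq_natCast_iff _ _ _).mpr
    (Choose.choose_modEq_choose_mod_mul_choose_div_nat (n := p * m + r) (k := p * j + s) (p := p))
  have hp : 0 < p := (Fact.out : p.Prime).pos
  rw [Nat.mul_add_mod, Nat.mul_add_mod, Nat.mod_eq_of_lt hr, Nat.mod_eq_of_lt hs,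
    Nat.mul_add_div hp, Nat.mul_add_div hp, Nat.div_eq_of_lt hr, Nat.div_eq_of_lt hs] at h
  simpa using h

theorem centralBinom_mul_add_cast_zmod {a b : ℕ} (hb : b < p) :
    ((p * a + b).centralBinom : ZMod p) = b.centralBinom * a.centralBinom := by
  simp only [centralBinom_eq_two_mul_choose]
  rcases lt_or_ge (2 * b) p with hno | hcarry
  · rw [show 2 * (p * a + b) = p * (2 * a) + 2 * b by ring,
      choose_mul_add_mul_add_cast_zmod hno hb]
  · have hlt : 2 * b - p < b := by omega
    have hcentral : ((2 * b).choose b : ZMod p) = 0 := by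
      have h := choose_mul_add_mul_add_cast_zmod (m := 1) (j := 0) (by omega : 2 * b - p < p) hb
      rwa [show p * 1 + (2 * b - p) = 2 * b by omega, mul_zero, zero_add,
        choose_eq_zero_of_lt hlt, cast_zero, zero_mul] at h
    rw [show 2 * (p * a + b) = p * (2 * a + 1) + (2 * b - p) by
        rw [Nat.mul_succ, Nat.mul_left_comm]; omega,
      choose_mul_add_mul_add_cast_zmod (by omega) hb, choose_eq_zero_of_lt hlt, hcentral]
    simp

theorem dombTerm_mul_add_cast_zmod {m j r s : ℕ} (hr : r < p) (hs : s < p) :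
    (dombTerm (p * m + r) (p * j + s) : ZMod p) = dombTerm m j * dombTerm r s := by
  simp only [dombTerm, cast_mul, cast_pow, choose_mul_add_mul_add_cast_zmod hr hs,
    centralBinom_mul_add_cast_zmod hs]
  by_cases hle : s ≤ r ∧ j ≤ m
  · rw [show p * m + r - (p * j + s) = p * (m - j) + (r - s) by
        rw [Nat.mul_sub]; have := Nat.mul_le_mul_left p hle.2; omega,
      centralBinom_mul_add_cast_zmod (by omega)]
    ring
  · obtain hrs | hmj : r < s ∨ m < j := by omega
    · simp [choose_eq_zero_of_lt hrs]
    · simp [choose_eq_zero_of_lt hmj]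

theorem domb_mul_add_cast_zmod {m r : ℕ} (hr : r < p) :
    (domb (p * m + r) : ZMod p) = domb m * domb r := by
  have hlt : p * m + r < p * (m + 1) := by rw [Nat.mul_succ]; omega
  calc (domb (p * m + r) : ZMod p)
      = ∑ j ∈ range (m + 1), ∑ s ∈ range p, (dombTerm (p * m + r) (p * j + s) : ZMod p) := by
        rw [domb_eq_sum_range_of_lt hlt, cast_sum, sum_range_mul_eq_sum_sum]
    _ = ∑ j ∈ range (m + 1), ∑ s ∈ range p, (dombTerm m j * dombTerm r s : ZMod p) :=
        sum_congr rfl fun _ _ ↦ sum_congr rfl fun _ hs ↦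
          dombTerm_mul_add_cast_zmod hr (mem_range.mp hs)
    _ = domb m * domb r := by
        rw [← sum_mul_sum, domb, domb_eq_sum_range_of_lt hr]
        push_cast
        rfl

end Lucas

theorem domb_cast_zmod_three (n : ℕ) : (domb n : ZMod 3) = 1 := by
  induction n using Nat.strong_induction_on with
  | _ n ih =>
    obtain hn | hn := lt_or_ge n 3
    · interval_cases n <;> decide
    · rw [← Nat.div_add_mod n 3, domb_mul_add_cast_zmod (Nat.mod_lt n three_pos),
        ih _ (by omega), ih _ (by omega), one_mul]

theorem domb_mod_three (n : ℕ) :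
    (∑ k ∈ Finset.range (n + 1),
        (n.choose k) ^ 2 * (2 * k).choose k * (2 * (n - k)).choose (n - k)) ≡ 1 [MOD 3] := by
  have h : (domb n : ZMod 3) = ((1 : ℕ) : ZMod 3) := by
    rw [domb_cast_zmod_three, cast_one]
  rw [ZMod.natCast_eq_natCast_iff] at h
  simpa [domb, dombTerm, centralBinom_eq_two_mul_choose] using h
end

section
/- For every nonnegative integer m, the Catalan–Larcombe–French number P_m := ∑_{k=0}^m C(2k,k)^2 C(2(m−k),m−k)^2 / C(m,k) equals 2^m · D_m^(1), where D_m^(1) = ∑_{k=0}^m C(m,k) C(2k,k) C(2(m−k),m−k). -/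
/-!
Both sides satisfy the recurrence
`(m + 2)² u (m + 2) = 8 (3m² + 9m + 7) u (m + 1) - 128 (m + 1)² u m`
and agree for `m = 0, 1`. The recurrences are proved by creative telescoping: applied to the
summands, each recurrence becomes a difference `G (k + 1) - G k` of an explicit certificate that
is a rational multiple of the summand, so the verification reduces, through the ratios of
neighbouring summands, to an identity of rational functions.
-/

open Finset Nat

section Telescoping

variable {R : Type*} [CommRing R]

theorem Finset.Nat.sum_antidiagonal_sub (g : ℕ → ℕ → R) (n : ℕ) :
    ∑ p ∈ antidiagonal n, (g (p.1 + 1) p.2 - g p.1 (p.2 + 1)) = g (n + 1) 0 - g 0 (n + 1) := by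
  have h₁ := Finset.Nat.sum_antidiagonal_succ (f := fun p => g p.1 p.2) (n := n)
  have h₂ := Finset.Nat.sum_antidiagonal_succ' (f := fun p => g p.1 p.2) (n := n)
  rw [sum_sub_distrib]
  linear_combination h₂ - h₁

theorem Finset.Nat.sum_antidiagonal_recurrence (f g : ℕ → ℕ → R) (n : ℕ) (a b c : R)
    (hcert : ∀ k j, k + j = n →
      a * f k (j + 2) - b * f k (j + 1) + c * f k j = g (k + 1) j - g k (j + 1))
    (hedge : a * (f (n + 1) 1 + f (n + 2) 0) - b * f (n + 1) 0 = g 0 (n + 1) - g (n + 1) 0) :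
    a * ∑ p ∈ antidiagonal (n + 2), f p.1 p.2 - b * ∑ p ∈ antidiagonal (n + 1), f p.1 p.2
      + c * ∑ p ∈ antidiagonal n, f p.1 p.2 = 0 := by
  have hsum := sum_congr rfl fun p hp => hcert p.1 p.2 (mem_antidiagonal.mp hp)
  rw [sum_antidiagonal_sub, sum_add_distrib, sum_sub_distrib, ← mul_sum, ← mul_sum,
    ← mul_sum] at hsum
  rw [sum_antidiagonal_succ' (n := n + 1), sum_antidiagonal_succ' (n := n),
    sum_antidiagonal_succ' (n := n)]
  linear_combination hsum + hedge

end Telescoping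

theorem eq_of_linear_recurrence {R : Type*} [CommRing R] [NoZeroDivisors R] {x y : ℕ → R}
    (a b c : ℕ → R) (ha : ∀ n, a n ≠ 0)
    (hx : ∀ n, a n * x (n + 2) - b n * x (n + 1) + c n * x n = 0)
    (hy : ∀ n, a n * y (n + 2) - b n * y (n + 1) + c n * y n = 0)
    (h₀ : x 0 = y 0) (h₁ : x 1 = y 1) : x = y := by
  have key : ∀ n, x n = y n ∧ x (n + 1) = y (n + 1) := by
    intro n
    induction n with
    | zero => exact ⟨h₀, h₁⟩
    | succ n ih =>
      refine ⟨ih.2, ?_⟩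
      have h : a n * (x (n + 2) - y (n + 2)) = 0 := by
        linear_combination hx n - hy n + b n * ih.2 - c n * ih.1
      exact sub_eq_zero.mp ((mul_eq_zero.mp h).resolve_left (ha n))
  exact funext fun n => (key n).1

namespace CatalanLarcombeFrench

theorem cast_centralBinom_succ (n : ℕ) :
    (centralBinom (n + 1) : ℚ) = 2 * (2 * n + 1) / (n + 1) * centralBinom n := by
  have h : ((n : ℚ) + 1) * centralBinom (n + 1) = 2 * (2 * n + 1) * centralBinom n := by
    exact_mod_cast succ_mul_centralBinom_succ n
  field_simp
  linear_combination h

theorem cast_choose_add_succ (k j : ℕ) :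
    ((k + (j + 1)).choose k : ℚ) = (k + j + 1) / (j + 1) * (k + j).choose k := by
  have h : ((k + j).choose k : ℚ) * (k + j + 1) = (k + j + 1).choose k * (j + 1) := by
    have h := choose_mul_succ_eq (k + j) k
    rw [show k + j + 1 - k = j + 1 by omega] at h
    exact_mod_cast h
  rw [← add_assoc]
  field_simp
  linear_combination -h

-- Summands are indexed by `(k, m - k)` rather than `k`, so that no truncated subtraction occurs.
def pTerm (k j : ℕ) : ℚ := (centralBinom k : ℚ) ^ 2 * (centralBinom j : ℚ) ^ 2 / (k + j).choose k

def dTerm (k j : ℕ) : ℚ := ((k + j).choose k : ℚ) * centralBinom k * centralBinom j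

theorem pTerm_comm (k j : ℕ) : pTerm k j = pTerm j k := by
  rw [pTerm, pTerm, add_comm j k, ← choose_symm_add, mul_comm]

theorem dTerm_comm (k j : ℕ) : dTerm k j = dTerm j k := by
  rw [dTerm, dTerm, add_comm j k, ← choose_symm_add]
  ring

theorem pTerm_succ_right (k j : ℕ) :
    pTerm k (j + 1) = 4 * (2 * j + 1) ^ 2 / ((j + 1) * (k + j + 1)) * pTerm k j := by
  have : ((k + j).choose k : ℚ) ≠ 0 := mod_cast (choose_pos (by omega)).ne'
  rw [pTerm, pTerm, cast_centralBinom_succ, cast_choose_add_succ]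
  field_simp
  ring

theorem pTerm_succ_left (k j : ℕ) :
    pTerm (k + 1) j = 4 * (2 * k + 1) ^ 2 / ((k + 1) * (k + j + 1)) * pTerm k j := by
  rw [pTerm_comm, pTerm_succ_right, pTerm_comm, add_comm (j : ℚ)]

theorem dTerm_succ_right (k j : ℕ) :
    dTerm k (j + 1) = 2 * (2 * j + 1) * (k + j + 1) / (j + 1) ^ 2 * dTerm k j := by
  rw [dTerm, dTerm, cast_centralBinom_succ, cast_choose_add_succ]
  field_simp

theorem dTerm_succ_left (k j : ℕ) :
    dTerm (k + 1) j = 2 * (2 * k + 1) * (k + j + 1) / (k + 1) ^ 2 * dTerm k j := by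
  rw [dTerm_comm, dTerm_succ_right, dTerm_comm, add_comm (j : ℚ)]

-- Zeilberger certificates for the two recurrences.
def pCert (k i : ℕ) : ℚ := 4 * k * (2 * (k + i + 1) * (i + 1) - 1) / (i + 1) * pTerm k i

def dCert (k i : ℕ) : ℚ :=
  -2 * k ^ 2 * (2 * k * i + k + (i + 1) * (2 * i - 1)) / (i + 1) ^ 2 * dTerm k i

theorem pTerm_certificate {k j n : ℕ} (h : k + j = n) :
    ((n : ℚ) + 2) ^ 2 * pTerm k (j + 2) - 8 * (3 * n ^ 2 + 9 * n + 7) * pTerm k (j + 1)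
      + 128 * (n + 1) ^ 2 * pTerm k j = pCert (k + 1) j - pCert k (j + 1) := by
  subst h
  simp only [pCert, pTerm_succ_right, pTerm_succ_left]
  push_cast
  field_simp
  ring

theorem dTerm_certificate {k j n : ℕ} (h : k + j = n) :
    ((n : ℚ) + 2) ^ 2 * dTerm k (j + 2) - 4 * (3 * n ^ 2 + 9 * n + 7) * dTerm k (j + 1)
      + 32 * (n + 1) ^ 2 * dTerm k j = dCert (k + 1) j - dCert k (j + 1) := by
  subst h
  simp only [dCert, dTerm_succ_right, dTerm_succ_left]
  push_cast
  field_simp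
  ring

theorem pTerm_edge (n : ℕ) :
    ((n : ℚ) + 2) ^ 2 * (pTerm (n + 1) 1 + pTerm (n + 2) 0)
      - 8 * (3 * n ^ 2 + 9 * n + 7) * pTerm (n + 1) 0 = pCert 0 (n + 1) - pCert (n + 1) 0 := by
  simp only [pCert, pTerm_succ_right, pTerm_succ_left (n + 1)]
  push_cast
  field_simp
  ring

theorem dTerm_edge (n : ℕ) :
    ((n : ℚ) + 2) ^ 2 * (dTerm (n + 1) 1 + dTerm (n + 2) 0)
      - 4 * (3 * n ^ 2 + 9 * n + 7) * dTerm (n + 1) 0 = dCert 0 (n + 1) - dCert (n + 1) 0 := by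
  simp only [dCert, dTerm_succ_right, dTerm_succ_left (n + 1)]
  push_cast
  field_simp
  ring

def P (n : ℕ) : ℚ := ∑ p ∈ antidiagonal n, pTerm p.1 p.2

def D (n : ℕ) : ℚ := ∑ p ∈ antidiagonal n, dTerm p.1 p.2

theorem P_recurrence (n : ℕ) :
    ((n : ℚ) + 2) ^ 2 * P (n + 2) - 8 * (3 * n ^ 2 + 9 * n + 7) * P (n + 1)
      + 128 * (n + 1) ^ 2 * P n = 0 :=
  Finset.Nat.sum_antidiagonal_recurrence pTerm pCert n _ _ _
    (fun _ _ h => pTerm_certificate h) (pTerm_edge n)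

theorem D_recurrence (n : ℕ) :
    ((n : ℚ) + 2) ^ 2 * D (n + 2) - 4 * (3 * n ^ 2 + 9 * n + 7) * D (n + 1)
      + 32 * (n + 1) ^ 2 * D n = 0 :=
  Finset.Nat.sum_antidiagonal_recurrence dTerm dCert n _ _ _
    (fun _ _ h => dTerm_certificate h) (dTerm_edge n)

theorem P_eq_two_pow_mul_D : P = fun n => 2 ^ n * D n := by
  refine eq_of_linear_recurrence (fun n => ((n : ℚ) + 2) ^ 2)
    (fun n => 8 * (3 * n ^ 2 + 9 * n + 7)) (fun n => 128 * (n + 1) ^ 2) (fun n => by positivity)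
    P_recurrence (fun n => by linear_combination 2 ^ (n + 2) * D_recurrence n) ?_ ?_ <;>
  norm_num [P, D, pTerm, dTerm, Finset.Nat.sum_antidiagonal_succ, centralBinom]

theorem P_eq_sum_range (m : ℕ) :
    P m = ∑ k ∈ range (m + 1),
      ((2 * k).choose k : ℚ) ^ 2 * ((2 * (m - k)).choose (m - k) : ℚ) ^ 2 / (m.choose k : ℚ) := by
  rw [P, sum_antidiagonal_eq_sum_range_succ pTerm]
  refine sum_congr rfl fun k hk => ?_
  rw [pTerm, centralBinom_eq_two_mul_choose, centralBinom_eq_two_mul_choose,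
    Nat.add_sub_cancel' (by simpa [Nat.lt_succ_iff] using hk)]

theorem D_eq_sum_range (m : ℕ) :
    D m = ∑ k ∈ range (m + 1),
      (m.choose k : ℚ) * ((2 * k).choose k : ℚ) * ((2 * (m - k)).choose (m - k) : ℚ) := by
  rw [D, sum_antidiagonal_eq_sum_range_succ dTerm]
  refine sum_congr rfl fun k hk => ?_
  rw [dTerm, centralBinom_eq_two_mul_choose, centralBinom_eq_two_mul_choose,
    Nat.add_sub_cancel' (by simpa [Nat.lt_succ_iff] using hk)]

end CatalanLarcombeFrench

theorem clf_eq_two_pow_mul_D (m : ℕ) :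
    (∑ k ∈ Finset.range (m + 1),
        ((2 * k).choose k : ℚ) ^ 2 * ((2 * (m - k)).choose (m - k) : ℚ) ^ 2 /
          (m.choose k : ℚ)) =
      2 ^ m * ∑ k ∈ Finset.range (m + 1),
        (m.choose k : ℚ) * ((2 * k).choose k : ℚ) * ((2 * (m - k)).choose (m - k) : ℚ) := by
  rw [← CatalanLarcombeFrench.P_eq_sum_range, ← CatalanLarcombeFrench.D_eq_sum_range]
  exact congrFun CatalanLarcombeFrench.P_eq_two_pow_mul_D m
end

section
/- For every positive integer m, the Apéry number b_m := ∑_{k=0}^m C(m,k)^2 C(m+k,k) is odd. -/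
/-!
Every term with `k ≥ 1` is even: by the trinomial identity
`C(m+k,k) C(m,k) = C(m+k,2k) C(2k,k)` it is a multiple of the central binomial coefficient
`C(2k,k)`, which is even. Only the term `k = 0`, equal to `1`, survives modulo `2`.
-/

namespace Nat

theorem even_add_choose_mul_choose {m k : ℕ} (hk : 0 < k) :
    Even ((m + k).choose k * m.choose k) := by
  have trinomial := Nat.choose_mul (n := m + k) (k := 2 * k) (s := k) (by omega)
  rw [show m + k - k = m by omega, show 2 * k - k = k by omega] at trinomial
  rw [← trinomial, even_iff_two_dvd, ← centralBinom_eq_two_mul_choose]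
  exact dvd_mul_of_dvd_right (two_dvd_centralBinom_of_one_le hk) _

theorem even_choose_sq_mul_add_choose {m k : ℕ} (hk : 0 < k) :
    Even (m.choose k ^ 2 * (m + k).choose k) := by
  rw [show m.choose k ^ 2 * (m + k).choose k = m.choose k * ((m + k).choose k * m.choose k) by
    ring]
  exact (even_add_choose_mul_choose hk).mul_left _

end Nat

theorem apery_b_odd_general (m : ℕ) :
    Odd (∑ k ∈ Finset.range (m + 1), (m.choose k) ^ 2 * (m + k).choose k) := by
  rw [Finset.sum_range_succ']
  have tail_even : Even (∑ k ∈ Finset.range m,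
      (m.choose (k + 1)) ^ 2 * (m + (k + 1)).choose (k + 1)) :=
    Finset.even_sum _ fun k _ => Nat.even_choose_sq_mul_add_choose k.succ_pos
  simpa using tail_even.add_one

theorem apery_b_odd (m : ℕ) (hm : 1 ≤ m) :
    Odd (∑ k ∈ Finset.range (m + 1), (m.choose k) ^ 2 * (m + k).choose k) :=
  apery_b_odd_general m
end

section
/- For every integer n ≥ 3, the binomial transform A_n' := ∑_{k=0}^n C(n,k) A_k of the Apéry numbers A_k = ∑_{j=0}^k C(k,j)^2 C(k+j,j)^2 is divisible by 24. -/
/-!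
Modulo a prime `p`, Lucas's theorem gives `A (p a + r) ≡ A a * A r` for `r < p`; with
`A 0, A 1, A 2 = 1, 5, 73` this yields `A k ≡ (-1)^k (mod 3)`.
Modulo 8, write `c_j = C(k,j) C(k+j,j) = C(2j,j) C(k+j,2j)`, which is even for `j ≥ 1`, so that
`c_j^2 ≡ 2 c_j` and `A k ≡ 2 D k - 1`, where `D k = ∑ c_j = ∑ C(k,i)^2 2^i` is the central Delannoy
number; as `D k ≡ 1 + 2k (mod 4)`, `A k ≡ 1 + 4k (mod 8)`.
Hence `A k ≡ 3 - 2(-1)^k (mod 24)`, and the binomial transform is congruent to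
`3 * 2^n - 2 * (1 - 1)^n = 3 * 2^n`, which is divisible by 24 once `n ≥ 3`.
-/

namespace Apery

open Finset

def centralDelannoy (k : ℕ) : ℕ := ∑ j ∈ range (k + 1), k.choose j * (k + j).choose j

def apery (k : ℕ) : ℕ := ∑ j ∈ range (k + 1), k.choose j ^ 2 * (k + j).choose j ^ 2

theorem add_choose_eq_sum_choose_mul_choose (k j : ℕ) :
    (k + j).choose j = ∑ i ∈ range (k + 1), k.choose i * j.choose i := by
  rw [← Nat.choose_symm_add, Nat.add_choose_eq, Nat.sum_antidiagonal_eq_sum_range_succ_mk,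
    ← sum_range_reflect]
  refine sum_congr rfl fun i hi => ?_
  have hik : i ≤ k := Nat.lt_succ_iff.mp (mem_range.mp hi)
  dsimp only
  rw [Nat.succ_sub_one, Nat.choose_symm hik, Nat.sub_sub_self hik]

theorem sum_choose_mul_choose (k i : ℕ) :
    ∑ j ∈ range (k + 1), k.choose j * j.choose i = k.choose i * 2 ^ (k - i) := by
  obtain hik | hki := le_or_gt i k
  · obtain ⟨m, rfl⟩ := Nat.exists_eq_add_of_le hik
    have hlow : ∑ j ∈ range i, (i + m).choose j * j.choose i = 0 :=
      sum_eq_zero fun j hj => by rw [Nat.choose_eq_zero_of_lt (mem_range.mp hj), mul_zero]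
    rw [add_assoc, sum_range_add, hlow, zero_add, Nat.add_sub_cancel_left, ← Nat.sum_range_choose,
      mul_sum]
    refine sum_congr rfl fun t _ => ?_
    rw [Nat.choose_mul (Nat.le_add_right i t), Nat.add_sub_cancel_left, Nat.add_sub_cancel_left]
  · rw [Nat.choose_eq_zero_of_lt hki, zero_mul]
    exact sum_eq_zero fun j hj => by
      rw [Nat.choose_eq_zero_of_lt (n := j) (by have := mem_range.mp hj; omega), mul_zero]

theorem centralDelannoy_eq_sum_choose_sq_mul_two_pow (k : ℕ) :
    centralDelannoy k = ∑ i ∈ range (k + 1), k.choose i ^ 2 * 2 ^ i := by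
  calc centralDelannoy k
      = ∑ i ∈ range (k + 1), k.choose i * ∑ j ∈ range (k + 1), k.choose j * j.choose i := by
        simp only [centralDelannoy, add_choose_eq_sum_choose_mul_choose, mul_sum]
        rw [sum_comm]
        exact sum_congr rfl fun _ _ => sum_congr rfl fun _ _ => by ring
    _ = ∑ i ∈ range (k + 1), k.choose (k - i) ^ 2 * 2 ^ (k - i) := by
        refine sum_congr rfl fun i hi => ?_
        rw [sum_choose_mul_choose, Nat.choose_symm (Nat.lt_succ_iff.mp (mem_range.mp hi))]
        ring
    _ = ∑ i ∈ range (k + 1), k.choose i ^ 2 * 2 ^ i := by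
        rw [← sum_range_reflect, Nat.add_sub_cancel]
        exact sum_congr rfl fun i hi => by
          rw [Nat.sub_sub_self (Nat.lt_succ_iff.mp (mem_range.mp hi))]

theorem centralDelannoy_modEq_four (k : ℕ) : (centralDelannoy k : ℤ) ≡ 1 + 2 * k [ZMOD 4] := by
  rw [centralDelannoy_eq_sum_choose_sq_mul_two_pow]
  cases k with
  | zero => rfl
  | succ m =>
    have htail :
        ∑ i ∈ range m, ((m + 1).choose (i + 1 + 1) : ℤ) ^ 2 * 2 ^ (i + 1 + 1) ≡ 0 [ZMOD 4] :=
      Int.ModEq.sum_zero fun i _ =>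
        Int.modEq_zero_iff_dvd.mpr ⟨((m + 1).choose (i + 2) : ℤ) ^ 2 * 2 ^ i, by ring⟩
    have hsq : 2 * ((m : ℤ) + 1) ^ 2 ≡ 2 * (m + 1) [ZMOD 4] := by
      obtain ⟨t, ht⟩ := Int.even_mul_succ_self (m : ℤ)
      exact Int.modEq_iff_dvd.mpr ⟨-t, by linear_combination (-2) * ht⟩
    push_cast
    rw [sum_range_succ', sum_range_succ']
    calc _ ≡ 0 + ((m + 1).choose (0 + 1) : ℤ) ^ 2 * 2 ^ (0 + 1) + ((m + 1).choose 0 : ℤ) ^ 2 * 2 ^ 0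
          [ZMOD 4] := (htail.add_right _).add_right _
      _ = 2 * ((m : ℤ) + 1) ^ 2 + 1 := by
        simp only [zero_add, Nat.choose_one_right, Nat.choose_zero_right]
        push_cast
        ring
      _ ≡ 2 * ((m : ℤ) + 1) + 1 [ZMOD 4] := hsq.add_right _
      _ = _ := by ring

theorem two_dvd_choose_mul_add_choose (k : ℕ) {j : ℕ} (hj : 0 < j) :
    2 ∣ k.choose j * (k + j).choose j := by
  obtain hjk | hkj := le_or_gt j k
  · have h := Nat.choose_mul (n := k + j) (k := 2 * j) (s := j) (by omega)
    rw [Nat.add_sub_cancel, show 2 * j - j = j by omega] at h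
    rw [mul_comm, ← h, ← Nat.centralBinom_eq_two_mul_choose]
    exact dvd_mul_of_dvd_right (Nat.two_dvd_centralBinom_of_one_le hj) _
  · rw [Nat.choose_eq_zero_of_lt hkj, zero_mul]
    exact dvd_zero 2

theorem sq_modEq_two_mul_of_two_dvd {c : ℤ} (hc : 2 ∣ c) : c ^ 2 ≡ 2 * c [ZMOD 8] := by
  obtain ⟨e, rfl⟩ := hc
  obtain ⟨t, ht⟩ := Int.even_mul_pred_self e
  exact Int.modEq_iff_dvd.mpr ⟨-t, by linear_combination (-4) * ht⟩

theorem apery_modEq_two_mul_centralDelannoy_sub_one (k : ℕ) :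
    (apery k : ℤ) ≡ 2 * centralDelannoy k - 1 [ZMOD 8] := by
  simp only [apery, centralDelannoy, ← mul_pow]
  push_cast
  rw [sum_range_succ', sum_range_succ']
  have hterm : ∀ i ∈ range k, ((k.choose (i + 1) : ℤ) * ((k + (i + 1)).choose (i + 1))) ^ 2 ≡
      2 * ((k.choose (i + 1) : ℤ) * ((k + (i + 1)).choose (i + 1))) [ZMOD 8] := fun i _ =>
    sq_modEq_two_mul_of_two_dvd (mod_cast two_dvd_choose_mul_add_choose k i.succ_pos)
  calc _ ≡ ∑ i ∈ range k, 2 * ((k.choose (i + 1) : ℤ) * ((k + (i + 1)).choose (i + 1))) +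
        ((k.choose 0 : ℤ) * ((k + 0).choose 0)) ^ 2 [ZMOD 8] := (Int.ModEq.sum hterm).add_right _
    _ = _ := by simp only [Nat.choose_zero_right, mul_add, mul_sum]; ring

theorem apery_modEq_eight (k : ℕ) : (apery k : ℤ) ≡ 1 + 4 * k [ZMOD 8] :=
  calc (apery k : ℤ) ≡ 2 * centralDelannoy k - 1 [ZMOD 8] :=
        apery_modEq_two_mul_centralDelannoy_sub_one k
    _ ≡ 2 * (1 + 2 * k) - 1 [ZMOD 8] :=
        ((centralDelannoy_modEq_four k).mul_left' (c := 2)).sub_right 1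
    _ = 1 + 4 * k := by ring

theorem sum_range_mul_eq_sum_mul_sum {R : Type*} [CommSemiring R] {p : ℕ} {g f h : ℕ → R}
    (hg : ∀ u v, v < p → g (p * u + v) = f u * h v) (m : ℕ) :
    ∑ j ∈ range (p * m), g j = (∑ u ∈ range m, f u) * ∑ v ∈ range p, h v := by
  induction m with
  | zero => simp
  | succ m ih =>
    rw [mul_add_one, sum_range_add, ih, sum_range_succ, add_mul, mul_sum (range p) h (f m)]
    exact congrArg _ (sum_congr rfl fun v hv => hg m v (mem_range.mp hv))

theorem apery_eq_sum_range {k N : ℕ} (hkN : k < N) :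
    apery k = ∑ j ∈ range N, k.choose j ^ 2 * (k + j).choose j ^ 2 := by
  refine sum_subset (range_subset_range.mpr hkN) fun j _ hj => ?_
  rw [Nat.choose_eq_zero_of_lt (by simpa using hj)]
  simp

section Lucas

variable {p : ℕ} [Fact p.Prime]

theorem choose_mul_add_mul_add {a r u v : ℕ} (hr : r < p) (hv : v < p) :
    ((p * a + r).choose (p * u + v) : ZMod p) = a.choose u * r.choose v := by
  have hp : 0 < p := (Fact.out : p.Prime).pos
  have h := (ZMod.intCast_eq_intCast_iff _ _ p).mpr
    (Choose.choose_modEq_choose_mod_mul_choose_div (n := p * a + r) (k := p * u + v) (p := p))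
  push_cast at h
  rw [h, Nat.mul_add_mod, Nat.mul_add_mod, Nat.mul_add_div hp, Nat.mul_add_div hp,
    Nat.mod_eq_of_lt hr, Nat.mod_eq_of_lt hv, Nat.div_eq_of_lt hr, Nat.div_eq_of_lt hv, mul_comm]
  simp

theorem add_choose_mul_add_mul_add {a r u v : ℕ} (hr : r < p) (hv : v < p) :
    ((p * a + r + (p * u + v)).choose (p * u + v) : ZMod p) =
      (a + u).choose u * (r + v).choose v := by
  obtain hrv | hrv := lt_or_ge (r + v) p
  · rw [show p * a + r + (p * u + v) = p * (a + u) + (r + v) by ring]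
    exact choose_mul_add_mul_add hrv hv
  · -- a carry in the last digit: `p ∣ (r + v).choose v`, and the left side vanishes too
    obtain ⟨s, hs⟩ := Nat.exists_eq_add_of_le hrv
    have hsv : s.choose v = 0 := Nat.choose_eq_zero_of_lt (by omega)
    have hcarry : ((r + v).choose v : ZMod p) = 0 := by
      simpa [hs, hsv] using choose_mul_add_mul_add (a := 1) (u := 0) (by omega : s < p) hv
    rw [show p * a + r + (p * u + v) = p * (a + u + 1) + s by linarith,
      choose_mul_add_mul_add (by omega) hv, hsv, hcarry]
    simp

theorem apery_mul_add_cast (a : ℕ) {r : ℕ} (hr : r < p) :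
    (apery (p * a + r) : ZMod p) = apery a * apery r := by
  have hlt : p * a + r < p * (a + 1) := by rw [mul_add_one]; omega
  rw [apery_eq_sum_range hlt, apery_eq_sum_range hr, Nat.cast_sum, apery, Nat.cast_sum,
    Nat.cast_sum]
  refine sum_range_mul_eq_sum_mul_sum (fun u v hv => ?_) (a + 1)
  push_cast
  rw [add_choose_mul_add_mul_add hr hv, choose_mul_add_mul_add hr hv]
  ring

end Lucas

theorem apery_cast_zmod_three (k : ℕ) : (apery k : ZMod 3) = (-1) ^ k := by
  induction k using Nat.strong_induction_on with
  | _ k ih =>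
    obtain hk | hk := lt_or_ge k 3
    · interval_cases k <;> decide
    · obtain ⟨a, r, hr, rfl⟩ : ∃ a r, r < 3 ∧ k = 3 * a + r := ⟨k / 3, k % 3, by omega, by omega⟩
      rw [apery_mul_add_cast a hr, ih a (by omega), ih r (by omega), pow_add, pow_mul]
      norm_num

theorem apery_modEq_twentyFour (k : ℕ) : (apery k : ℤ) ≡ 3 - 2 * (-1) ^ k [ZMOD 24] := by
  have h8 : (apery k : ℤ) ≡ 3 - 2 * (-1) ^ k [ZMOD 8] := by
    refine (apery_modEq_eight k).trans ?_
    obtain ⟨m, rfl⟩ | ⟨m, rfl⟩ := Nat.even_or_odd k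
    · rw [Even.neg_one_pow ⟨m, rfl⟩]
      exact Int.modEq_iff_dvd.mpr ⟨-m, by push_cast; ring⟩
    · rw [(odd_two_mul_add_one m).neg_one_pow]
      exact Int.modEq_iff_dvd.mpr ⟨-m, by push_cast; ring⟩
  have h3 : (apery k : ℤ) ≡ 3 - 2 * (-1) ^ k [ZMOD 3] := by
    refine (ZMod.intCast_eq_intCast_iff _ _ 3).mp ?_
    push_cast
    rw [apery_cast_zmod_three]
    obtain h | h := neg_one_pow_eq_or (ZMod 3) k <;> rw [h] <;> decide
  exact (Int.modEq_and_modEq_iff_modEq_mul (by decide)).mp ⟨h8, h3⟩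

theorem sum_choose_mul_three_sub_two_mul_neg_one_pow {n : ℕ} (hn : n ≠ 0) :
    ∑ k ∈ range (n + 1), (n.choose k : ℤ) * (3 - 2 * (-1) ^ k) = 3 * 2 ^ n := by
  have hsum : ∑ k ∈ range (n + 1), (n.choose k : ℤ) = 2 ^ n := mod_cast Nat.sum_range_choose n
  calc ∑ k ∈ range (n + 1), (n.choose k : ℤ) * (3 - 2 * (-1) ^ k)
      = 3 * ∑ k ∈ range (n + 1), (n.choose k : ℤ)
          - 2 * ∑ k ∈ range (n + 1), (-1) ^ k * (n.choose k : ℤ) := by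
        rw [mul_sum, mul_sum, ← sum_sub_distrib]
        exact sum_congr rfl fun _ _ => by ring
    _ = 3 * 2 ^ n := by rw [hsum, Int.alternating_sum_range_choose_of_ne hn]; ring

end Apery

open Apery Finset in
theorem apery_A_binomial_transform_div_24 (n : ℕ) (hn : 3 ≤ n) :
    24 ∣ ∑ k ∈ Finset.range (n + 1), n.choose k *
        ∑ j ∈ Finset.range (k + 1), (k.choose j) ^ 2 * ((k + j).choose j) ^ 2 := by
  change 24 ∣ ∑ k ∈ range (n + 1), n.choose k * apery k
  obtain ⟨m, rfl⟩ := Nat.exists_eq_add_of_le hn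
  have h : (∑ k ∈ range (3 + m + 1), (3 + m).choose k * apery k : ℤ) ≡ 0 [ZMOD 24] :=
    calc _ ≡ ∑ k ∈ range (3 + m + 1), ((3 + m).choose k : ℤ) * (3 - 2 * (-1) ^ k) [ZMOD 24] :=
          Int.ModEq.sum fun k _ => (apery_modEq_twentyFour k).mul_left _
      _ = 24 * 2 ^ m := by rw [sum_choose_mul_three_sub_two_mul_neg_one_pow (by omega)]; ring
      _ ≡ 0 [ZMOD 24] := Int.modEq_zero_iff_dvd.mpr (dvd_mul_right _ _)
  exact_mod_cast Int.modEq_zero_iff_dvd.mp h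
end

section
/- Let k be a positive integer and (x_i)_{i≥0} an integer sequence with x_0 = 1 such that 2k divides x_i for all i ≥ 1, and 4k divides x_i (for i ≥ 1) if and only if i is not a power of two. Then for every n ≥ 0, the Hankel determinant det[x_{i+j}]_{0≤i,j≤n} divided by (2k)^n is an odd integer. -/
/-!
Write `x_i = 2k y_i` for `i ≥ 1`. Pulling `2k` out of rows `1, …, n` gives `det H = (2k)^n det Z`,
where `Z` keeps the first row `x_j` and has entries `y_{i+j}` below it. Modulo 2 the first row of
`Z` is `(1, 0, …, 0)` and `y_s` is odd exactly when `s` is a power of two, so `det Z` is congruent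
to the determinant of `P_n = [i + j is a power of two]_{1 ≤ i, j ≤ n}`.

Exactly one permutation `σ` of `{1, …, n}` makes every `i + σ i` a power of two, so
`det P_n = ±1`. Indeed, if `2^e ≤ n < 2^(e+1)`, then `σ` must send `i ↦ 2^(e+1) - i` on
`[2^(e+1) - n, n]` and restrict to such a permutation of `{1, …, 2^(e+1) - 1 - n}`.
-/

open Equiv

def IsPowTwo (t : ℕ) : Prop := ∃ j : ℕ, t = 2 ^ j

lemma IsPowTwo.eq_of_lt_two_mul {t k : ℕ} (ht : IsPowTwo t) (h₁ : 2 ^ k < 2 * t)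
    (h₂ : t < 2 * 2 ^ k) : t = 2 ^ k := by
  obtain ⟨j, rfl⟩ := ht
  rw [← pow_succ'] at h₁ h₂
  have := (Nat.pow_lt_pow_iff_right (by norm_num)).mp h₁
  have := (Nat.pow_lt_pow_iff_right (by norm_num)).mp h₂
  rw [show j = k by omega]

lemma Nat.two_pow_size_le {m : ℕ} (hm : 0 < m) : 2 ^ m.size ≤ 2 * m := by
  have hs := Nat.size_pos.mpr hm
  have := Nat.lt_size.mp (Nat.sub_one_lt hs.ne')
  calc 2 ^ m.size = 2 * 2 ^ (m.size - 1) := by rw [← pow_succ']; congr; omega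
    _ ≤ 2 * m := by omega

def bitCompl (m : ℕ) : ℕ := 2 ^ m.size - 1 - m

lemma bitCompl_lt {m : ℕ} (h : 0 < bitCompl m) : bitCompl m < m := by
  obtain rfl | hm := m.eq_zero_or_pos
  · simp [bitCompl] at h
  have := Nat.two_pow_size_le hm
  unfold bitCompl
  omega

def powTwoPartner (m i : ℕ) : ℕ :=
  if i < bitCompl m then powTwoPartner (bitCompl m) i else 2 ^ m.size - 2 - i
termination_by m
decreasing_by exact bitCompl_lt (by omega)

lemma powTwoPartner_of_lt {m i : ℕ} (h : i < bitCompl m) :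
    powTwoPartner m i = powTwoPartner (bitCompl m) i := by
  rw [powTwoPartner, if_pos h]

lemma powTwoPartner_of_le {m i : ℕ} (h : bitCompl m ≤ i) :
    powTwoPartner m i = 2 ^ m.size - 2 - i := by
  rw [powTwoPartner, if_neg (not_lt.mpr h)]

lemma powTwoPartner_lt {m i : ℕ} (hi : i < m) : powTwoPartner m i < m := by
  induction m using Nat.strong_induction_on generalizing i with
  | _ m ih =>
    by_cases h : i < bitCompl m
    · rw [powTwoPartner_of_lt h]
      exact (ih _ (bitCompl_lt (by omega)) h).trans (bitCompl_lt (by omega))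
    · rw [powTwoPartner_of_le (not_lt.mp h)]
      unfold bitCompl at h
      omega

lemma powTwoPartner_powTwoPartner {m i : ℕ} (hi : i < m) :
    powTwoPartner m (powTwoPartner m i) = i := by
  induction m using Nat.strong_induction_on generalizing i with
  | _ m ih =>
    by_cases h : i < bitCompl m
    · rw [powTwoPartner_of_lt h, powTwoPartner_of_lt (powTwoPartner_lt h),
        ih _ (bitCompl_lt (by omega)) h]
    · have := Nat.lt_size_self m
      have hp := powTwoPartner_of_le (not_lt.mp h)
      unfold bitCompl at h
      rw [hp, powTwoPartner_of_le (by unfold bitCompl; omega)]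
      omega

lemma isPowTwo_powTwoPartner_add {m i : ℕ} (hi : i < m) :
    IsPowTwo (powTwoPartner m i + i + 2) := by
  induction m using Nat.strong_induction_on generalizing i with
  | _ m ih =>
    by_cases h : i < bitCompl m
    · rw [powTwoPartner_of_lt h]
      exact ih _ (bitCompl_lt (by omega)) h
    · have := Nat.lt_size_self m
      rw [powTwoPartner_of_le (not_lt.mp h)]
      exact ⟨m.size, by omega⟩

def powTwoPairing (n : ℕ) : Perm (Fin n) :=
  Function.Involutive.toPerm (fun i => ⟨powTwoPartner n i, powTwoPartner_lt i.2⟩)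
    fun i => Fin.ext (powTwoPartner_powTwoPartner i.2)

/-- Indices are `0`-based, so `i + j + 2` is the sum of the `1`-based indices. -/
def IsPowTwoSum {n : ℕ} (σ : Perm (Fin n)) : Prop := ∀ i, IsPowTwo ((σ i).1 + i.1 + 2)

lemma isPowTwoSum_powTwoPairing (n : ℕ) : IsPowTwoSum (powTwoPairing n) :=
  fun i => isPowTwo_powTwoPartner_add i.2

namespace IsPowTwoSum

variable {n m : ℕ} {σ : Perm (Fin n)}

lemma inv (hσ : IsPowTwoSum σ) : IsPowTwoSum σ⁻¹ := fun i => by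
  simpa [add_comm] using hσ (σ⁻¹ i)

lemma lt_iff_inv_lt (hm : ∀ i : Fin n, i.1 < m ↔ (σ i).1 < m) (i : Fin n) :
    i.1 < m ↔ (σ⁻¹ i).1 < m := by
  simpa using (hm (σ⁻¹ i)).symm

lemma add_eq_two_pow_size (hσ : IsPowTwoSum σ) {i : Fin n} (hi : i.1 < m) (hσi : (σ i).1 < m)
    (hle : 2 ^ m.size ≤ 2 * (i.1 + 1)) : (σ i).1 + i.1 + 2 = 2 ^ m.size := by
  have := Nat.lt_size_self m
  exact (hσ i).eq_of_lt_two_mul (by omega) (by omega)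

lemma add_eq_two_pow_size_of_bitCompl_le (hσ : IsPowTwoSum σ) (hmn : m ≤ n)
    (hm : ∀ i : Fin n, i.1 < m ↔ (σ i).1 < m) {i : Fin n} (hi : i.1 < m)
    (hc : bitCompl m ≤ i.1) : (σ i).1 + i.1 + 2 = 2 ^ m.size := by
  by_cases hle : 2 ^ m.size ≤ 2 * (i.1 + 1)
  · exact hσ.add_eq_two_pow_size hi ((hm i).mp hi) hle
  -- otherwise `i` is the partner of `j = 2 ^ m.size - 2 - i`, which lies in the upper half
  have := Nat.lt_size_self m
  unfold bitCompl at hc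
  let j : Fin n := ⟨2 ^ m.size - 2 - i.1, by omega⟩
  have hjm : j.1 < m := by simp [j]; omega
  have hj := hσ.inv.add_eq_two_pow_size hjm ((lt_iff_inv_lt hm j).mp hjm) (by simp [j]; omega)
  have hj' : (σ⁻¹ j).1 + (2 ^ m.size - 2 - i.1) + 2 = 2 ^ m.size := hj
  have : σ i = j := by
    rw [← show σ⁻¹ j = i from Fin.ext (by omega)]
    simp
  simp [this, j]
  omega

lemma lt_bitCompl_iff (hσ : IsPowTwoSum σ) (hmn : m ≤ n)
    (hm : ∀ i : Fin n, i.1 < m ↔ (σ i).1 < m) (i : Fin n) :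
    i.1 < bitCompl m ↔ (σ i).1 < bitCompl m := by
  have key : ∀ {τ : Perm (Fin n)}, IsPowTwoSum τ → (∀ i : Fin n, i.1 < m ↔ (τ i).1 < m) →
      ∀ i : Fin n, i.1 < bitCompl m → (τ i).1 < bitCompl m := by
    intro τ hτ hτm i hi
    have := bitCompl_lt (m := m) (by omega)
    by_contra hc
    have hτi := (hτm i).mp (by omega)
    have h := hτ.inv.add_eq_two_pow_size_of_bitCompl_le hmn (lt_iff_inv_lt hτm) hτi
      (not_lt.mp hc)
    replace h : i.1 + (τ i).1 + 2 = 2 ^ m.size := by simpa using h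
    unfold bitCompl at hi hc
    omega
  refine ⟨key hσ hm i, fun h => ?_⟩
  simpa using key hσ.inv (lt_iff_inv_lt hm) (σ i) h

lemma val_eq_powTwoPartner (hσ : IsPowTwoSum σ) (hmn : m ≤ n)
    (hm : ∀ i : Fin n, i.1 < m ↔ (σ i).1 < m) {i : Fin n} (hi : i.1 < m) :
    (σ i).1 = powTwoPartner m i := by
  induction m using Nat.strong_induction_on with
  | _ m ih =>
    by_cases h : i.1 < bitCompl m
    · rw [powTwoPartner_of_lt h]
      have := bitCompl_lt (m := m) (by omega)
      exact ih _ this (by omega) (hσ.lt_bitCompl_iff hmn hm) h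
    · rw [powTwoPartner_of_le (not_lt.mp h)]
      have := hσ.add_eq_two_pow_size_of_bitCompl_le hmn hm hi (not_lt.mp h)
      omega

lemma eq_powTwoPairing (hσ : IsPowTwoSum σ) : σ = powTwoPairing n :=
  Equiv.ext fun i => Fin.ext (hσ.val_eq_powTwoPartner le_rfl (fun _ => by simp) i.2)

end IsPowTwoSum

open scoped Classical in
noncomputable def powTwoMatrix (R : Type*) [Zero R] [One R] (n : ℕ) : Matrix (Fin n) (Fin n) R :=
  Matrix.of fun i j => if IsPowTwo (i.1 + j.1 + 2) then 1 else 0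

open scoped Classical in
theorem det_powTwoMatrix (R : Type*) [CommRing R] (n : ℕ) :
    (powTwoMatrix R n).det = Perm.sign (powTwoPairing n) := by
  have hprod : ∀ σ : Perm (Fin n),
      ∏ i, powTwoMatrix R n (σ i) i = if IsPowTwoSum σ then 1 else 0 :=
    fun σ => by simp only [powTwoMatrix, Matrix.of_apply]; convert Fintype.prod_boole; rfl
  rw [Matrix.det_apply', Finset.sum_eq_single (powTwoPairing n)]
  · rw [hprod, if_pos (isPowTwoSum_powTwoPairing n), mul_one]
  · intro σ _ hσ
    rw [hprod, if_neg (mt IsPowTwoSum.eq_powTwoPairing hσ), mul_zero]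
  · simp

lemma ZMod.intCast_eq_ite_odd (a : ℤ) : (a : ZMod 2) = if Odd a then 1 else 0 := by
  split_ifs with h
  · exact ZMod.intCast_eq_one_iff_odd.mpr h
  · exact ZMod.intCast_eq_zero_iff_even.mpr (Int.not_odd_iff_even.mp h)

open scoped Classical in
theorem odd_det_of_odd_iff {n : ℕ} (Z : Matrix (Fin (n + 1)) (Fin (n + 1)) ℤ)
    (h₀ : ∀ j, Odd (Z 0 j) ↔ j = 0)
    (hsucc : ∀ i j : Fin n, Odd (Z i.succ j.succ) ↔ IsPowTwo (i.1 + j.1 + 2)) :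
    Odd Z.det := by
  set W := Z.map (Int.castRingHom (ZMod 2))
  have hW₀ : ∀ j, W 0 j = if j = 0 then 1 else 0 := fun j => by
    simp [W, ZMod.intCast_eq_ite_odd, h₀]
  have hWsucc : W.submatrix Fin.succ Fin.succ = powTwoMatrix (ZMod 2) n := by
    ext i j
    simpa [W, powTwoMatrix, ZMod.intCast_eq_ite_odd] using if_congr (hsucc i j) rfl rfl
  have hdet : (Z.det : ZMod 2) = Perm.sign (powTwoPairing n) := by
    rw [← det_powTwoMatrix, ← hWsucc]
    calc (Z.det : ZMod 2) = W.det := (Int.castRingHom (ZMod 2)).map_det Z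
      _ = _ := by
        rw [Matrix.det_succ_row_zero, Fin.sum_univ_succ]
        simp [hW₀]
  rw [← Int.not_even_iff_odd, ← ZMod.intCast_eq_zero_iff_even, hdet]
  rcases Int.units_eq_one_or (Perm.sign (powTwoPairing n)) with h | h <;> simp [h]

theorem det_hankel_eq_pow_mul_det (x : ℕ → ℤ) (c : ℤ) (hc : ∀ i, 1 ≤ i → c ∣ x i) (n : ℕ) :
    (Matrix.of fun i j : Fin (n + 1) => x (i.1 + j.1)).det = c ^ n *
      (Matrix.of fun i j : Fin (n + 1) => if i = 0 then x j else x (i.1 + j.1) / c).det := by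
  have hfactor : (Matrix.of fun i j : Fin (n + 1) => x (i.1 + j.1)) =
      Matrix.diagonal (fun i => if i = 0 then 1 else c) *
        Matrix.of fun i j : Fin (n + 1) => if i = 0 then x j else x (i.1 + j.1) / c := by
    ext i j
    rw [Matrix.diagonal_mul]
    by_cases hi : i = 0
    · simp [hi]
    · have := Nat.one_le_iff_ne_zero.mpr (Fin.val_ne_zero_iff.mpr hi)
      simp only [Matrix.of_apply, if_neg hi]
      rw [Int.mul_ediv_cancel' (hc _ (by omega))]
  rw [hfactor, Matrix.det_mul, Matrix.det_diagonal, Fin.prod_univ_succ]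
  simp [Fin.succ_ne_zero]

theorem hankel_det_odd_quotient_general (k : ℕ) (x : ℕ → ℤ) (hx0 : x 0 = 1)
    (hdvd : ∀ i : ℕ, 1 ≤ i → (2 * k : ℤ) ∣ x i)
    (hiff : ∀ i : ℕ, 1 ≤ i → ((4 * k : ℤ) ∣ x i ↔ ¬ ∃ j : ℕ, i = 2 ^ j)) (n : ℕ) :
    ∃ m : ℤ, Odd m ∧
      Matrix.det (Matrix.of fun i j : Fin (n + 1) => x (i.1 + j.1)) = (2 * k : ℤ) ^ n * m := by
  refine ⟨_, odd_det_of_odd_iff _ (fun j => ?_) (fun i j => ?_),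
    det_hankel_eq_pow_mul_det x _ hdvd n⟩
  · simp only [Matrix.of_apply, Fin.val_zero, Nat.zero_add]
    rcases eq_or_ne j 0 with rfl | hj
    · simp [hx0]
    · have hj1 := Nat.one_le_iff_ne_zero.mpr (Fin.val_ne_zero_iff.mpr hj)
      have heven : Even (x j) := even_iff_two_dvd.mpr ((dvd_mul_right 2 _).trans (hdvd j hj1))
      exact iff_of_false (Int.not_odd_iff_even.mpr heven) hj
  · simp only [Matrix.of_apply, if_neg (Fin.succ_ne_zero _), Fin.val_succ]
    have hij : 1 ≤ i.1 + 1 + (j.1 + 1) := by omega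
    rw [← Int.not_even_iff_odd, even_iff_two_dvd, Int.dvd_div_iff_mul_dvd (hdvd _ hij),
      show (2 * k : ℤ) * 2 = 4 * k by ring, hiff _ hij, not_not]
    simp only [IsPowTwo, add_add_add_comm, one_add_one_eq_two]

theorem hankel_det_odd_quotient (k : ℕ) (hk : 1 ≤ k) (x : ℕ → ℤ) (hx0 : x 0 = 1)
    (hdvd : ∀ i : ℕ, 1 ≤ i → (2 * k : ℤ) ∣ x i)
    (hiff : ∀ i : ℕ, 1 ≤ i → ((4 * k : ℤ) ∣ x i ↔ ¬ ∃ j : ℕ, i = 2 ^ j)) (n : ℕ) :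
    ∃ m : ℤ, Odd m ∧
      Matrix.det (Matrix.of fun i j : Fin (n + 1) => x (i.1 + j.1)) = (2 * k : ℤ) ^ n * m :=
  hankel_det_odd_quotient_general k x hx0 hdvd hiff n
end
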